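/- Let 0 ≤ k ≤ n−1, let 0 < ε < 1, 0 ≤ λ ≤ 1, and let A ⊆ X(k) be ε-locally thin (F(A) ≤ ε). If X is a one-sided λ-local spectral expander, then ‖M⁺_k χ_A‖ ≤ ( 1/√(k+2) + √(ε + λ) ) ‖χ_A‖. -/

import Mathlib

/-!
Framework: a pure `n`-dimensional finite weighted simplicial complex, following
Kaufman–Oppenheim, "High Order Random Walks: Beyond Spectral Gap".

A complex is given by its finset of faces (finsets of a vertex type `V`) together with
a weight function `m`.  We index levels by **cardinality**: `X.K c` is the set of faces
with `c` elements, i.e. the set `X(k)` of `k`-dimensional faces for `k = c - 1`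
(so `X(-1) = X.K 0`, and a pure `n`-dimensional complex has top level `X.K (n+1)`).
-/

noncomputable section

open Finset

/-- The data of a weighted simplicial complex: a finite family of faces and a weight. -/
structure WSC (V : Type*) [DecidableEq V] where
  faces : Finset (Finset V)
  m : Finset V → ℝ

namespace WSC

variable {V : Type*} [DecidableEq V]

/-- `X.IsWSC n` : `X` is a pure `n`-dimensional finite weighted simplicial complex:
the faces form a nonempty downward-closed family, every face is contained in a face with
`n+1` elements (and no face has more), the weights are positive, and the weight of every
face of cardinality `≤ n` is the sum of the weights of the faces covering it. -/
def IsWSC (X : WSC V) (n : ℕ) : Prop :=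
  ∅ ∈ X.faces ∧
  (∀ ⦃σ τ : Finset V⦄, σ ∈ X.faces → τ ⊆ σ → τ ∈ X.faces) ∧
  (∀ ⦃σ⦄, σ ∈ X.faces → σ.card ≤ n + 1) ∧
  (∀ ⦃σ⦄, σ ∈ X.faces → ∃ η ∈ X.faces, σ ⊆ η ∧ η.card = n + 1) ∧
  (∀ ⦃σ⦄, σ ∈ X.faces → 0 < X.m σ) ∧
  (∀ ⦃τ⦄, τ ∈ X.faces → τ.card ≤ n →
    X.m τ = ∑ σ ∈ X.faces.filter (fun σ => τ ⊆ σ ∧ σ.card = τ.card + 1), X.m σ)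

/-- `X.K c` : the faces with `c` elements, i.e. `X(c-1)` in dimension indexing. -/
def K (X : WSC V) (c : ℕ) : Finset (Finset V) := X.faces.filter (fun σ => σ.card = c)

/-- The weighted inner product on cochains supported on the faces with `c` elements. -/
def inn (X : WSC V) (c : ℕ) (φ ψ : Finset V → ℝ) : ℝ :=
  ∑ σ ∈ X.K c, X.m σ * (φ σ * ψ σ)

/-- The squared norm of a cochain on the faces with `c` elements. -/
def normSq (X : WSC V) (c : ℕ) (φ : Finset V → ℝ) : ℝ := X.inn c φ φ

/-- The norm of a cochain on the faces with `c` elements. -/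
def norm (X : WSC V) (c : ℕ) (φ : Finset V → ℝ) : ℝ := Real.sqrt (X.normSq c φ)

/-- `X.cochainZero c φ` : φ belongs to `C^{c-1}_0 (X, ℝ)`, i.e. it is orthogonal to the
constant functions at level `c`. -/
def cochainZero (X : WSC V) (c : ℕ) (φ : Finset V → ℝ) : Prop :=
  ∑ σ ∈ X.K c, X.m σ * φ σ = 0

/-- The signless differential, from cochains at level `c` to cochains at level `c+1`:
`(d φ)(σ) = ∑_{τ ∈ X(c-1), τ ⊂ σ} φ(τ)`. -/
def d (X : WSC V) (c : ℕ) (φ : Finset V → ℝ) : Finset V → ℝ :=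
  fun σ => ∑ τ ∈ (X.K c).filter (fun τ => τ ⊆ σ), φ τ

/-- The (explicit formula for the) adjoint of the signless differential, from cochains at
level `c+1` to cochains at level `c`: `(d* ψ)(τ) = ∑_{σ ⊇ τ} (m σ / m τ) ψ(σ)`. -/
def dStar (X : WSC V) (c : ℕ) (ψ : Finset V → ℝ) : Finset V → ℝ :=
  fun τ => ∑ σ ∈ (X.K (c + 1)).filter (fun σ => τ ⊆ σ), (X.m σ / X.m τ) * ψ σ

/-- The (lazy) upper random walk operator `M⁺` on cochains at level `c`
(i.e. on `k`-cochains for `k = c-1`; note `k + 2 = c + 1`). -/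
def Mup (X : WSC V) (c : ℕ) (φ : Finset V → ℝ) : Finset V → ℝ :=
  fun τ => (1 / ((c : ℝ) + 1)) * φ τ +
    ∑ τ' ∈ (X.K c).filter (fun τ' => τ ∪ τ' ∈ X.K (c + 1)),
      (X.m (τ ∪ τ') / (((c : ℝ) + 1) * X.m τ)) * φ τ'

/-- The lower random walk operator `M⁻` on cochains at level `c`
(i.e. on `k`-cochains for `k = c-1`; note `k + 1 = c`). -/
def Mdown (X : WSC V) (c : ℕ) (φ : Finset V → ℝ) : Finset V → ℝ :=
  fun τ => (∑ η ∈ (X.K (c - 1)).filter (fun η => η ⊆ τ), X.m τ / ((c : ℝ) * X.m η)) * φ τ +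
    ∑ τ' ∈ (X.K c).filter (fun τ' => τ' ≠ τ ∧ τ ∩ τ' ∈ X.K (c - 1)),
      (X.m τ' / ((c : ℝ) * X.m (τ ∩ τ'))) * φ τ'

/-- The non-lazy upper random walk operator `(M')⁺ = ((k+2)/(k+1)) M⁺ - (1/(k+1)) I`
on cochains at level `c = k+1`. -/
def Mup' (X : WSC V) (c : ℕ) (φ : Finset V → ℝ) : Finset V → ℝ :=
  fun τ => (((c : ℝ) + 1) / (c : ℝ)) * X.Mup c φ τ - (1 / (c : ℝ)) * φ τ

/-- The link `X_τ` of a face `τ`, with the induced weight `m_τ (η) = m (τ ∪ η)`. -/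
def link (X : WSC V) (τ : Finset V) : WSC V where
  faces := X.faces.filter (fun η => η ∩ τ = ∅ ∧ τ ∪ η ∈ X.faces)
  m := fun η => X.m (τ ∪ η)

/-- The localization `φ_τ (η) = φ (τ ∪ η)` of a cochain `φ` to the link of `τ`. -/
def localize (φ : Finset V → ℝ) (τ : Finset V) : Finset V → ℝ := fun η => φ (τ ∪ η)

/-- The underlying graph (1-skeleton) of a complex. -/
def skeleton (Y : WSC V) : SimpleGraph {v : V // ({v} : Finset V) ∈ Y.faces} where
  Adj u w := u ≠ w ∧ ({(u : V), (w : V)} : Finset V) ∈ Y.faces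
  symm := by
    constructor
    intro u w h
    refine ⟨h.1.symm, ?_⟩
    rw [Finset.pair_comm]
    exact h.2
  loopless := by constructor; intro u h; exact h.1 rfl

/-- All links of `X` of dimension `≥ 1` (including `X` itself, as the link of `∅`)
have a connected underlying graph. -/
def LinksConnected (X : WSC V) (n : ℕ) : Prop :=
  ∀ c < n, ∀ τ ∈ X.K c, (X.link τ).skeleton.Connected

/-- The second largest eigenvalue of the self-adjoint operator `(M')⁺₀` on `C⁰(Y, ℝ)`,
via its Rayleigh-quotient characterization over the orthogonal complement of the
constant functions (the top eigenfunction). -/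
def secondEig (Y : WSC V) : ℝ :=
  sSup {r : ℝ | ∃ ψ : Finset V → ℝ, Y.normSq 1 ψ ≠ 0 ∧
    (∑ v ∈ Y.K 1, Y.m v * ψ v) = 0 ∧ r = Y.inn 1 (Y.Mup' 1 ψ) ψ / Y.normSq 1 ψ}

/-- The smallest eigenvalue of the self-adjoint operator `(M')⁺₀` on `C⁰(Y, ℝ)`,
via its Rayleigh-quotient characterization. -/
def smallestEig (Y : WSC V) : ℝ :=
  sInf {r : ℝ | ∃ ψ : Finset V → ℝ, Y.normSq 1 ψ ≠ 0 ∧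
    r = Y.inn 1 (Y.Mup' 1 ψ) ψ / Y.normSq 1 ψ}

/-- `μ_k = max_{τ ∈ X(k-1)} μ_τ` where `μ_τ` is the second largest eigenvalue of
`(M')⁺_{τ,0}`; faces `τ ∈ X(k-1)` have `k` elements. -/
def mu (X : WSC V) (k : ℕ) : ℝ :=
  sSup {r : ℝ | ∃ τ ∈ X.K k, r = (X.link τ).secondEig}

/-- `ν_k = min_{τ ∈ X(k-1)} ν_τ` where `ν_τ` is the smallest eigenvalue of
`(M')⁺_{τ,0}`; faces `τ ∈ X(k-1)` have `k` elements. -/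
def nu (X : WSC V) (k : ℕ) : ℝ :=
  sInf {r : ℝ | ∃ τ ∈ X.K k, r = (X.link τ).smallestEig}

/-- `X` is a one-sided `λ`-local spectral expander: `μ_k ≤ λ` for every `0 ≤ k ≤ n-1`. -/
def OneSided (X : WSC V) (n : ℕ) (lam : ℝ) : Prop := ∀ k < n, X.mu k ≤ lam

/-- `X` is a two-sided `λ`-local spectral expander: `μ_k ≤ λ` and `ν_k ≥ -λ`
for every `0 ≤ k ≤ n-1`. -/
def TwoSided (X : WSC V) (n : ℕ) (lam : ℝ) : Prop :=
  ∀ k < n, X.mu k ≤ lam ∧ -lam ≤ X.nu k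

end WSC

open WSC

/-!
Let `P φ = ∑ m(τ ∪ τ') φ(τ) φ(τ')` (`upperPairing`), summed over ordered pairs of faces with
`c` vertices whose union is a face with `c + 1` vertices. Then `(c+1) ⟨M⁺φ, φ⟩ = ‖φ‖² + P φ`,
and `M⁺ = (c+1)⁻¹ d* d` with `‖d*‖² ≤ c + 1` gives `‖M⁺φ‖² ≤ ⟨M⁺φ, φ⟩`. The form `P` splits
over the faces `η` with `c - 1` vertices: the pair `τ, τ'` is counted once, in the link of
`η = τ ∩ τ'`. In that link the localized cochain is a constant plus a part orthogonal to the
constants; the latter contributes at most `λ ‖·‖²` by the definition of `μ`, the constant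
contributes `(∑_{τ ⊇ η} m(τ) φ(τ))² / m(η)`. For `φ = χ_A` these squares sum to at most
`(k+1) ε ‖χ_A‖²` by local thinness, so `‖M⁺χ_A‖² ≤ (1/(k+2) + ε + λ) ‖χ_A‖²`.
-/

theorem Finset.sum_sum_filter_subset_comm {α M : Type*} [DecidableEq α] [AddCommMonoid M]
    (s t : Finset (Finset α)) (f : Finset α → Finset α → M) :
    ∑ a ∈ s, ∑ b ∈ t.filter (a ⊆ ·), f a b = ∑ b ∈ t, ∑ a ∈ s.filter (· ⊆ b), f a b :=
  Finset.sum_comm' fun _ _ => by simp only [Finset.mem_filter]; tauto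

theorem Finset.union_eq_of_card_eq_succ {α : Type*} [DecidableEq α] {s t u : Finset α}
    (hs : s ⊆ u) (ht : t ⊆ u) (hst : s ≠ t) (hcard : s.card = t.card)
    (hu : u.card = s.card + 1) : s ∪ t = u := by
  have hts : ¬ t ⊆ s := fun h => hst (Finset.eq_of_subset_of_card_le h hcard.le).symm
  have hlt : s.card < (s ∪ t).card :=
    Finset.card_lt_card ⟨Finset.subset_union_left, fun h => hts (Finset.subset_union_right.trans h)⟩
  exact Finset.eq_of_subset_of_card_le (Finset.union_subset hs ht) (by omega)

theorem Real.sqrt_add_le_sqrt_add_sqrt {a b : ℝ} (ha : 0 ≤ a) (hb : 0 ≤ b) :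
    √(a + b) ≤ √a + √b :=
  Real.sqrt_le_iff.mpr ⟨by positivity, by
    nlinarith [Real.sq_sqrt ha, Real.sq_sqrt hb, Real.sqrt_nonneg a, Real.sqrt_nonneg b]⟩

namespace WSC

variable {V : Type*} [DecidableEq V]

theorem mem_K {X : WSC V} {c : ℕ} {σ : Finset V} : σ ∈ X.K c ↔ σ ∈ X.faces ∧ σ.card = c :=
  Finset.mem_filter

def upperNbrs (X : WSC V) (c : ℕ) (τ : Finset V) : Finset (Finset V) :=
  (X.K c).filter (fun τ' => τ ∪ τ' ∈ X.K (c + 1))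

def upperPairing (X : WSC V) (c : ℕ) (φ : Finset V → ℝ) : ℝ :=
  ∑ τ ∈ X.K c, ∑ τ' ∈ X.upperNbrs c τ, X.m (τ ∪ τ') * (φ τ * φ τ')

theorem sum_upperNbrs_comm (X : WSC V) (c : ℕ) (f : Finset V → Finset V → ℝ) :
    ∑ τ ∈ X.K c, ∑ τ' ∈ X.upperNbrs c τ, f τ τ' = ∑ τ ∈ X.K c, ∑ τ' ∈ X.upperNbrs c τ, f τ' τ :=
  Finset.sum_comm' fun τ τ' => by
    simp only [upperNbrs, Finset.mem_filter]
    rw [Finset.union_comm τ' τ]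
    tauto

theorem sum_upperNbrs_eq_sum_superset {X : WSC V} {c : ℕ} {τ : Finset V} (hτ : τ ∈ X.K c)
    (g : Finset V → Finset V → ℝ) :
    ∑ τ' ∈ X.upperNbrs c τ, g (τ ∪ τ') τ' =
      ∑ σ ∈ (X.K (c + 1)).filter (τ ⊆ ·), ∑ ρ ∈ ((X.K c).filter (· ⊆ σ)).erase τ, g σ ρ := by
  symm
  rw [Finset.sum_comm' (t' := X.upperNbrs c τ) (s' := fun ρ => {τ ∪ ρ})]
  · simp only [Finset.sum_singleton]
  · intro σ ρ
    have hτc := (mem_K.mp hτ).2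
    simp only [upperNbrs, Finset.mem_filter, Finset.mem_erase, Finset.mem_singleton, mem_K]
    constructor
    · rintro ⟨⟨⟨hσf, hσc⟩, hτσ⟩, hne, ⟨hρf, hρc⟩, hρσ⟩
      have hσ : τ ∪ ρ = σ :=
        Finset.union_eq_of_card_eq_succ hτσ hρσ (Ne.symm hne) (by omega) (by omega)
      exact ⟨hσ.symm, ⟨hρf, hρc⟩, hσ ▸ hσf, hσ ▸ hσc⟩
    · rintro ⟨rfl, ⟨hρf, hρc⟩, hσf, hσc⟩
      refine ⟨⟨⟨hσf, hσc⟩, Finset.subset_union_left⟩, ?_, ⟨hρf, hρc⟩, Finset.subset_union_right⟩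
      rintro rfl
      rw [Finset.union_self] at hσc
      omega

theorem normSq_add_const (X : WSC V) (c : ℕ) (φ : Finset V → ℝ) (t : ℝ) :
    X.normSq c (fun x => φ x + t) = X.normSq c φ +
      2 * t * ∑ τ ∈ X.K c, X.m τ * φ τ + t ^ 2 * ∑ τ ∈ X.K c, X.m τ := by
  simp only [normSq, inn, Finset.mul_sum, ← Finset.sum_add_distrib]
  exact Finset.sum_congr rfl fun _ _ => by ring

theorem secondEig_link_le {X : WSC V} {n k : ℕ} {lam : ℝ} (hexp : X.OneSided n lam)
    (hk : k < n) {η : Finset V} (hη : η ∈ X.K k) : (X.link η).secondEig ≤ lam := by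
  have hbdd : BddAbove {r : ℝ | ∃ τ ∈ X.K k, r = (X.link τ).secondEig} :=
    ((X.K k).finite_toSet.image fun τ => (X.link τ).secondEig).bddAbove.mono
      (by rintro _ ⟨τ, hτ, rfl⟩; exact ⟨τ, hτ, rfl⟩)
  exact (le_csSup hbdd ⟨η, hη, rfl⟩).trans (hexp k hk)

theorem norm_le_of_normSq_le {X : WSC V} {c : ℕ} {φ ψ : Finset V → ℝ} {a b : ℝ}
    (ha : 0 ≤ a) (hb : 0 ≤ b) (h : X.normSq c ψ ≤ (a + b) * X.normSq c φ) :
    X.norm c ψ ≤ (√a + √b) * X.norm c φ :=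
  calc √(X.normSq c ψ) ≤ √((a + b) * X.normSq c φ) := Real.sqrt_le_sqrt h
    _ = √(a + b) * √(X.normSq c φ) := Real.sqrt_mul (add_nonneg ha hb) _
    _ ≤ (√a + √b) * √(X.normSq c φ) :=
        mul_le_mul_of_nonneg_right (Real.sqrt_add_le_sqrt_add_sqrt ha hb) (Real.sqrt_nonneg _)

namespace IsWSC

variable {X : WSC V} {n : ℕ}

theorem m_pos (hX : X.IsWSC n) {σ : Finset V} (hσ : σ ∈ X.faces) : 0 < X.m σ :=
  hX.2.2.2.2.1 hσ

theorem mem_faces_of_subset (hX : X.IsWSC n) {σ τ : Finset V} (hσ : σ ∈ X.faces)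
    (h : τ ⊆ σ) : τ ∈ X.faces :=
  hX.2.1 hσ h

theorem m_eq_sum_K_succ (hX : X.IsWSC n) {c : ℕ} (hc : c ≤ n) {τ : Finset V}
    (hτ : τ ∈ X.K c) : X.m τ = ∑ σ ∈ (X.K (c + 1)).filter (τ ⊆ ·), X.m σ := by
  obtain ⟨hf, rfl⟩ := mem_K.mp hτ
  rw [hX.2.2.2.2.2 hf hc]
  congr 1
  ext σ
  simp only [K, Finset.mem_filter]
  tauto

theorem sum_K_one_m (hX : X.IsWSC n) : ∑ a ∈ X.K 1, X.m a = X.m ∅ := by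
  rw [hX.m_eq_sum_K_succ n.zero_le (mem_K.mpr ⟨hX.1, Finset.card_empty⟩),
    Finset.filter_true_of_mem fun _ _ => Finset.empty_subset _]

theorem filter_K_subset_eq_powersetCard (hX : X.IsWSC n) {σ : Finset V} (hσ : σ ∈ X.faces)
    (c : ℕ) : (X.K c).filter (· ⊆ σ) = σ.powersetCard c := by
  ext τ
  simp only [Finset.mem_filter, mem_K, Finset.mem_powersetCard]
  exact ⟨fun ⟨⟨_, h⟩, hs⟩ => ⟨hs, h⟩, fun ⟨hs, h⟩ => ⟨⟨hX.mem_faces_of_subset hσ hs, h⟩, hs⟩⟩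

theorem card_filter_K_subset (hX : X.IsWSC n) {c : ℕ} {σ : Finset V} (hσ : σ ∈ X.K (c + 1)) :
    ((X.K c).filter (· ⊆ σ)).card = c + 1 := by
  obtain ⟨hf, hc⟩ := mem_K.mp hσ
  rw [hX.filter_K_subset_eq_powersetCard hf, Finset.card_powersetCard, hc,
    Nat.choose_succ_self_right]

theorem sum_K_sum_filter_superset (hX : X.IsWSC n) (c : ℕ) (f : Finset V → ℝ) :
    ∑ η ∈ X.K c, ∑ τ ∈ (X.K (c + 1)).filter (η ⊆ ·), f τ =
      ((c : ℝ) + 1) * ∑ τ ∈ X.K (c + 1), f τ := by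
  rw [Finset.sum_sum_filter_subset_comm, Finset.mul_sum]
  refine Finset.sum_congr rfl fun τ hτ => ?_
  rw [Finset.sum_const, hX.card_filter_K_subset hτ, nsmul_eq_mul]
  push_cast
  ring

theorem normSq_nonneg (hX : X.IsWSC n) (c : ℕ) (φ : Finset V → ℝ) : 0 ≤ X.normSq c φ :=
  Finset.sum_nonneg fun _ hτ => mul_nonneg (hX.m_pos (mem_K.mp hτ).1).le (mul_self_nonneg _)

theorem sum_upperNbrs_m (hX : X.IsWSC n) {c : ℕ} (hc : c ≤ n) {τ : Finset V}
    (hτ : τ ∈ X.K c) : ∑ τ' ∈ X.upperNbrs c τ, X.m (τ ∪ τ') = c * X.m τ := by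
  rw [sum_upperNbrs_eq_sum_superset hτ (fun σ _ => X.m σ), hX.m_eq_sum_K_succ hc hτ,
    Finset.mul_sum]
  refine Finset.sum_congr rfl fun σ hσ => ?_
  obtain ⟨hσK, hτσ⟩ := Finset.mem_filter.mp hσ
  rw [Finset.sum_const, Finset.card_erase_of_mem (Finset.mem_filter.mpr ⟨hτ, hτσ⟩),
    hX.card_filter_K_subset hσK, nsmul_eq_mul, Nat.add_sub_cancel]

theorem sum_sum_upperNbrs_mul (hX : X.IsWSC n) {c : ℕ} (hc : c ≤ n) (f : Finset V → ℝ) :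
    ∑ τ ∈ X.K c, ∑ τ' ∈ X.upperNbrs c τ, X.m (τ ∪ τ') * f τ =
      c * ∑ τ ∈ X.K c, X.m τ * f τ := by
  rw [Finset.mul_sum]
  refine Finset.sum_congr rfl fun τ hτ => ?_
  rw [← Finset.sum_mul, hX.sum_upperNbrs_m hc hτ, mul_assoc]

theorem sum_sum_upperNbrs_mul' (hX : X.IsWSC n) {c : ℕ} (hc : c ≤ n) (f : Finset V → ℝ) :
    ∑ τ ∈ X.K c, ∑ τ' ∈ X.upperNbrs c τ, X.m (τ ∪ τ') * f τ' =
      c * ∑ τ ∈ X.K c, X.m τ * f τ := by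
  rw [sum_upperNbrs_comm, ← hX.sum_sum_upperNbrs_mul hc f]
  simp only [Finset.union_comm]

theorem upperPairing_le (hX : X.IsWSC n) {c : ℕ} (hc : c ≤ n) (φ : Finset V → ℝ) :
    X.upperPairing c φ ≤ c * X.normSq c φ := by
  have hamgm : ∀ τ ∈ X.K c, ∀ τ' ∈ X.upperNbrs c τ, X.m (τ ∪ τ') * (φ τ * φ τ') ≤
      X.m (τ ∪ τ') * (φ τ * φ τ) / 2 + X.m (τ ∪ τ') * (φ τ' * φ τ') / 2 := by
    intro τ _ τ' hτ'
    have hm := (hX.m_pos (mem_K.mp (Finset.mem_filter.mp hτ').2).1).le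
    nlinarith [mul_nonneg hm (sq_nonneg (φ τ - φ τ'))]
  calc X.upperPairing c φ
      ≤ ∑ τ ∈ X.K c, ∑ τ' ∈ X.upperNbrs c τ,
          (X.m (τ ∪ τ') * (φ τ * φ τ) / 2 + X.m (τ ∪ τ') * (φ τ' * φ τ') / 2) :=
        Finset.sum_le_sum fun τ hτ => Finset.sum_le_sum (hamgm τ hτ)
    _ = c * X.normSq c φ := by
        simp only [Finset.sum_add_distrib, ← Finset.sum_div]
        rw [hX.sum_sum_upperNbrs_mul hc (fun τ => φ τ * φ τ),
          hX.sum_sum_upperNbrs_mul' hc (fun τ => φ τ * φ τ), normSq, inn]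
        ring

theorem inn_dStar (hX : X.IsWSC n) (c : ℕ) (ψ φ : Finset V → ℝ) :
    X.inn c (X.dStar c ψ) φ = X.inn (c + 1) ψ (X.d c φ) := by
  unfold inn dStar d
  calc ∑ τ ∈ X.K c, X.m τ * ((∑ σ ∈ (X.K (c + 1)).filter (τ ⊆ ·), X.m σ / X.m τ * ψ σ) * φ τ)
      = ∑ τ ∈ X.K c, ∑ σ ∈ (X.K (c + 1)).filter (τ ⊆ ·), X.m σ * (ψ σ * φ τ) := by
        refine Finset.sum_congr rfl fun τ hτ => ?_
        have hmτ := (hX.m_pos (mem_K.mp hτ).1).ne'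
        rw [Finset.sum_mul, Finset.mul_sum]
        exact Finset.sum_congr rfl fun σ _ => by field_simp
    _ = ∑ σ ∈ X.K (c + 1), ∑ τ ∈ (X.K c).filter (· ⊆ σ), X.m σ * (ψ σ * φ τ) :=
        Finset.sum_sum_filter_subset_comm _ _ _
    _ = _ := Finset.sum_congr rfl fun σ _ => by rw [Finset.mul_sum, Finset.mul_sum]

theorem normSq_dStar_le (hX : X.IsWSC n) {c : ℕ} (hc : c ≤ n) (ψ : Finset V → ℝ) :
    X.normSq c (X.dStar c ψ) ≤ ((c : ℝ) + 1) * X.normSq (c + 1) ψ := by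
  have hjensen : ∀ τ ∈ X.K c, X.m τ * (X.dStar c ψ τ * X.dStar c ψ τ) ≤
      ∑ σ ∈ (X.K (c + 1)).filter (τ ⊆ ·), X.m σ * (ψ σ * ψ σ) := by
    intro τ hτ
    have hmτ := hX.m_pos (mem_K.mp hτ).1
    have hpos : ∀ σ ∈ (X.K (c + 1)).filter (τ ⊆ ·), 0 < X.m σ :=
      fun σ hσ => hX.m_pos (mem_K.mp (Finset.mem_filter.mp hσ).1).1
    have hmass := Finset.sq_sum_div_le_sum_sq_div _ (fun σ => X.m σ * ψ σ) hpos
    rw [← hX.m_eq_sum_K_succ hc hτ] at hmass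
    calc X.m τ * (X.dStar c ψ τ * X.dStar c ψ τ)
        = (∑ σ ∈ (X.K (c + 1)).filter (τ ⊆ ·), X.m σ * ψ σ) ^ 2 / X.m τ := by
          rw [dStar, ← Finset.sum_congr rfl fun σ _ => mul_div_right_comm (X.m σ) (ψ σ) (X.m τ),
            ← Finset.sum_div]
          field_simp
      _ ≤ _ := hmass
      _ = _ := Finset.sum_congr rfl fun σ hσ => by field_simp [(hpos σ hσ).ne']
  calc X.normSq c (X.dStar c ψ)
      ≤ ∑ τ ∈ X.K c, ∑ σ ∈ (X.K (c + 1)).filter (τ ⊆ ·), X.m σ * (ψ σ * ψ σ) :=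
        Finset.sum_le_sum hjensen
    _ = _ := hX.sum_K_sum_filter_superset c _

theorem Mup_eq_dStar_d (hX : X.IsWSC n) {c : ℕ} (hc : c ≤ n) (φ : Finset V → ℝ)
    {τ : Finset V} (hτ : τ ∈ X.K c) :
    X.Mup c φ τ = 1 / ((c : ℝ) + 1) * X.dStar c (X.d c φ) τ := by
  have hmτ := (hX.m_pos (mem_K.mp hτ).1).ne'
  have hweights : ∑ σ ∈ (X.K (c + 1)).filter (τ ⊆ ·), X.m σ / X.m τ = 1 := by
    rw [← Finset.sum_div, ← hX.m_eq_sum_K_succ hc hτ, div_self hmτ]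
  have hsplit : X.dStar c (X.d c φ) τ =
      φ τ + ∑ τ' ∈ X.upperNbrs c τ, X.m (τ ∪ τ') / X.m τ * φ τ' := by
    rw [sum_upperNbrs_eq_sum_superset hτ (fun σ ρ => X.m σ / X.m τ * φ ρ)]
    conv_rhs => rw [← one_mul (φ τ), ← hweights, Finset.sum_mul, ← Finset.sum_add_distrib]
    refine Finset.sum_congr rfl fun σ hσ => ?_
    rw [d, ← Finset.add_sum_erase _ _ (Finset.mem_filter.mpr ⟨hτ, (Finset.mem_filter.mp hσ).2⟩),
      mul_add, Finset.mul_sum]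
  rw [hsplit, Mup, mul_add, Finset.mul_sum, one_div_mul_eq_div]
  congr 1
  exact Finset.sum_congr rfl fun τ' _ => by field_simp

theorem normSq_Mup_le_inn (hX : X.IsWSC n) {c : ℕ} (hc : c ≤ n) (φ : Finset V → ℝ) :
    X.normSq c (X.Mup c φ) ≤ X.inn c (X.Mup c φ) φ := by
  have hsq : X.normSq c (X.Mup c φ) =
      (1 / ((c : ℝ) + 1)) ^ 2 * X.normSq c (X.dStar c (X.d c φ)) := by
    rw [normSq, inn, normSq, inn, Finset.mul_sum]
    exact Finset.sum_congr rfl fun τ hτ => by rw [hX.Mup_eq_dStar_d hc φ hτ]; ring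
  have hinn : X.inn c (X.Mup c φ) φ = 1 / ((c : ℝ) + 1) * X.normSq (c + 1) (X.d c φ) := by
    rw [normSq, ← hX.inn_dStar, inn, inn, Finset.mul_sum]
    exact Finset.sum_congr rfl fun τ hτ => by rw [hX.Mup_eq_dStar_d hc φ hτ]; ring
  rw [hsq, hinn]
  calc (1 / ((c : ℝ) + 1)) ^ 2 * X.normSq c (X.dStar c (X.d c φ))
      ≤ (1 / ((c : ℝ) + 1)) ^ 2 * (((c : ℝ) + 1) * X.normSq (c + 1) (X.d c φ)) := by
        gcongr
        exact hX.normSq_dStar_le hc _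
    _ = 1 / ((c : ℝ) + 1) * X.normSq (c + 1) (X.d c φ) := by field_simp

theorem inn_Mup_self (hX : X.IsWSC n) (c : ℕ) (φ : Finset V → ℝ) :
    ((c : ℝ) + 1) * X.inn c (X.Mup c φ) φ = X.normSq c φ + X.upperPairing c φ := by
  rw [inn, normSq, inn, upperPairing, Finset.mul_sum, ← Finset.sum_add_distrib]
  refine Finset.sum_congr rfl fun τ hτ => ?_
  have hmτ := (hX.m_pos (mem_K.mp hτ).1).ne'
  rw [Mup, show ∀ S : ℝ, ((c : ℝ) + 1) * (X.m τ * ((1 / ((c : ℝ) + 1) * φ τ + S) * φ τ)) =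
      X.m τ * (φ τ * φ τ) + ((c : ℝ) + 1) * X.m τ * φ τ * S from fun S => by field_simp,
    Finset.mul_sum]
  congr 1
  exact Finset.sum_congr rfl fun τ' _ => by field_simp

theorem inn_Mup'_self (hX : X.IsWSC n) {c : ℕ} (hc : c ≠ 0) (φ : Finset V → ℝ) :
    (c : ℝ) * X.inn c (X.Mup' c φ) φ = X.upperPairing c φ := by
  have hc' : (c : ℝ) ≠ 0 := Nat.cast_ne_zero.mpr hc
  calc (c : ℝ) * X.inn c (X.Mup' c φ) φ
      = ((c : ℝ) + 1) * X.inn c (X.Mup c φ) φ - X.normSq c φ := by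
        rw [inn, inn, normSq, inn, Finset.mul_sum, Finset.mul_sum, ← Finset.sum_sub_distrib]
        exact Finset.sum_congr rfl fun τ _ => by rw [Mup']; field_simp
    _ = X.upperPairing c φ := by rw [hX.inn_Mup_self]; ring

theorem upperPairing_add_const (hX : X.IsWSC n) {c : ℕ} (hc : c ≤ n) (φ : Finset V → ℝ)
    (t : ℝ) : X.upperPairing c (fun x => φ x + t) = X.upperPairing c φ +
      2 * c * t * ∑ τ ∈ X.K c, X.m τ * φ τ + c * t ^ 2 * ∑ τ ∈ X.K c, X.m τ := by
  have hconst := hX.sum_sum_upperNbrs_mul hc (fun _ => 1)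
  simp only [mul_one] at hconst
  have hexpand : ∀ τ τ', X.m (τ ∪ τ') * ((φ τ + t) * (φ τ' + t)) =
      X.m (τ ∪ τ') * (φ τ * φ τ') + t * (X.m (τ ∪ τ') * φ τ) + t * (X.m (τ ∪ τ') * φ τ') +
        t ^ 2 * X.m (τ ∪ τ') := fun _ _ => by ring
  simp only [upperPairing, hexpand, Finset.sum_add_distrib, ← Finset.mul_sum]
  rw [hX.sum_sum_upperNbrs_mul hc φ, hX.sum_sum_upperNbrs_mul' hc φ, hconst]
  ring

theorem upperPairing_le_secondEig_mul (hX : X.IsWSC n) (hn : 1 ≤ n) {ψ : Finset V → ℝ}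
    (hψ : X.cochainZero 1 ψ) : X.upperPairing 1 ψ ≤ X.secondEig * X.normSq 1 ψ := by
  have hrayleigh : ∀ χ, X.inn 1 (X.Mup' 1 χ) χ = X.upperPairing 1 χ := fun χ => by
    simpa using hX.inn_Mup'_self one_ne_zero χ
  rcases (hX.normSq_nonneg 1 ψ).eq_or_lt with h0 | hpos
  · simpa [← h0] using hX.upperPairing_le hn ψ
  · have hbdd : BddAbove {r : ℝ | ∃ χ : Finset V → ℝ, X.normSq 1 χ ≠ 0 ∧
        (∑ v ∈ X.K 1, X.m v * χ v) = 0 ∧ r = X.inn 1 (X.Mup' 1 χ) χ / X.normSq 1 χ} := by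
      refine ⟨1, ?_⟩
      rintro _ ⟨χ, -, -, rfl⟩
      rw [hrayleigh]
      exact div_le_one_of_le₀ (by simpa using hX.upperPairing_le hn χ) (hX.normSq_nonneg 1 χ)
    have hle := le_csSup hbdd ⟨ψ, hpos.ne', hψ, by rw [hrayleigh]⟩
    exact (div_le_iff₀ hpos).mp hle

theorem upperPairing_le_of_secondEig_le (hX : X.IsWSC n) (hn : 1 ≤ n) {lam : ℝ} (hlam : 0 ≤ lam)
    (hsec : X.secondEig ≤ lam) (ψ : Finset V → ℝ) :
    X.upperPairing 1 ψ ≤ (∑ a ∈ X.K 1, X.m a * ψ a) ^ 2 / X.m ∅ + lam * X.normSq 1 ψ := by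
  have hM := hX.sum_K_one_m
  have hM0 := hX.m_pos hX.1
  set t := (∑ a ∈ X.K 1, X.m a * ψ a) / X.m ∅
  set g : Finset V → ℝ := fun x => ψ x - t
  have hψ : ψ = fun x => g x + t := by funext x; simp [g]
  have hg : X.cochainZero 1 g := by
    simp only [cochainZero, g, mul_sub, Finset.sum_sub_distrib, ← Finset.sum_mul, hM, t]
    field_simp
    ring
  have hPψ : X.upperPairing 1 ψ = X.upperPairing 1 g + t ^ 2 * X.m ∅ := by
    rw [hψ, hX.upperPairing_add_const hn, hg, hM]
    ring
  have hnormψ : X.normSq 1 ψ = X.normSq 1 g + t ^ 2 * X.m ∅ := by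
    rw [hψ, normSq_add_const, hg, hM]
    ring
  have hconst : t ^ 2 * X.m ∅ = (∑ a ∈ X.K 1, X.m a * ψ a) ^ 2 / X.m ∅ := by
    simp only [t, div_pow]
    field_simp
  have hPg := hX.upperPairing_le_secondEig_mul hn hg
  have hng := hX.normSq_nonneg 1 g
  nlinarith [mul_le_mul_of_nonneg_right hsec hng, mul_nonneg hlam (sq_nonneg t), hM0.le]

theorem mem_link_faces_iff (hX : X.IsWSC n) {η a : Finset V} :
    a ∈ (X.link η).faces ↔ Disjoint η a ∧ η ∪ a ∈ X.faces := by
  rw [link, Finset.mem_filter, ← Finset.disjoint_iff_inter_eq_empty, disjoint_comm]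
  exact ⟨fun h => h.2, fun h => ⟨hX.mem_faces_of_subset h.2 Finset.subset_union_right, h⟩⟩

theorem mem_link_K_iff (hX : X.IsWSC n) {e j : ℕ} {η a : Finset V} (hη : η ∈ X.K e) :
    a ∈ (X.link η).K j ↔ Disjoint η a ∧ η ∪ a ∈ X.K (e + j) := by
  obtain ⟨-, rfl⟩ := mem_K.mp hη
  rw [mem_K, hX.mem_link_faces_iff, mem_K]
  constructor
  · rintro ⟨⟨hd, hf⟩, rfl⟩
    exact ⟨hd, hf, Finset.card_union_of_disjoint hd⟩
  · rintro ⟨hd, hf, hc⟩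
    rw [Finset.card_union_of_disjoint hd] at hc
    exact ⟨⟨hd, hf⟩, by omega⟩

theorem sdiff_mem_link_K (hX : X.IsWSC n) {e j : ℕ} {η τ : Finset V} (hη : η ∈ X.K e)
    (hτ : τ ∈ X.K (e + j)) (h : η ⊆ τ) : τ \ η ∈ (X.link η).K j :=
  (hX.mem_link_K_iff hη).mpr ⟨Finset.disjoint_sdiff, by rwa [Finset.union_sdiff_of_subset h]⟩

theorem sum_link_K (hX : X.IsWSC n) {e : ℕ} {η : Finset V} (hη : η ∈ X.K e) (j : ℕ)
    (f : Finset V → ℝ) :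
    ∑ a ∈ (X.link η).K j, f (η ∪ a) = ∑ τ ∈ (X.K (e + j)).filter (η ⊆ ·), f τ :=
  Finset.sum_nbij' (η ∪ ·) (· \ η)
    (fun _ ha => Finset.mem_filter.mpr ⟨((hX.mem_link_K_iff hη).mp ha).2, Finset.subset_union_left⟩)
    (fun _ hτ => hX.sdiff_mem_link_K hη (Finset.mem_filter.mp hτ).1 (Finset.mem_filter.mp hτ).2)
    (fun _ ha => Finset.union_sdiff_cancel_left ((hX.mem_link_K_iff hη).mp ha).1)
    (fun _ hτ => Finset.union_sdiff_of_subset (Finset.mem_filter.mp hτ).2)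
    (fun _ _ => rfl)

theorem card_union_of_mem_link (hX : X.IsWSC n) {e : ℕ} {η a : Finset V} (hη : η ∈ X.K e)
    (ha : a ∈ (X.link η).faces) : (η ∪ a).card = e + a.card := by
  rw [Finset.card_union_of_disjoint (hX.mem_link_faces_iff.mp ha).1, (mem_K.mp hη).2]

theorem m_link_eq_sum (hX : X.IsWSC n) {e : ℕ} (he : e ≤ n) {η a : Finset V} (hη : η ∈ X.K e)
    (ha : a ∈ (X.link η).faces) (hac : a.card ≤ n - e) :
    (X.link η).m a = ∑ b ∈ (X.link η).faces.filter (fun b => a ⊆ b ∧ b.card = a.card + 1),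
      (X.link η).m b := by
  have hcard := fun {b} (hb : b ∈ (X.link η).faces) => hX.card_union_of_mem_link hη hb
  obtain ⟨hd, hf⟩ := hX.mem_link_faces_iff.mp ha
  change X.m (η ∪ a) = ∑ b ∈ _, X.m (η ∪ b)
  rw [hX.2.2.2.2.2 hf (by rw [hcard ha]; omega)]
  symm
  refine Finset.sum_nbij' (η ∪ ·) (· \ η) (fun b hb => ?_) (fun σ hσ => ?_)
    (fun b hb => ?_) (fun σ hσ => ?_) (fun _ _ => rfl)
  · obtain ⟨hbf, hab, hbc⟩ := Finset.mem_filter.mp hb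
    refine Finset.mem_filter.mpr ⟨(hX.mem_link_faces_iff.mp hbf).2,
      Finset.union_subset_union_right hab, ?_⟩
    rw [hcard hbf, hcard ha, hbc, add_assoc]
  · obtain ⟨hσf, hsub, hσc⟩ := Finset.mem_filter.mp hσ
    have hησ : η ⊆ σ := Finset.subset_union_left.trans hsub
    refine Finset.mem_filter.mpr ⟨hX.mem_link_faces_iff.mpr
      ⟨Finset.disjoint_sdiff, by rwa [Finset.union_sdiff_of_subset hησ]⟩,
      Finset.subset_sdiff.mpr ⟨Finset.subset_union_right.trans hsub, hd.symm⟩, ?_⟩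
    rw [Finset.card_sdiff_of_subset hησ, hσc, hcard ha, (mem_K.mp hη).2]
    omega
  · exact Finset.union_sdiff_cancel_left (hX.mem_link_faces_iff.mp (Finset.mem_filter.mp hb).1).1
  · exact Finset.union_sdiff_of_subset
      (Finset.subset_union_left.trans (Finset.mem_filter.mp hσ).2.1)

theorem link (hX : X.IsWSC n) {e : ℕ} (he : e ≤ n) {η : Finset V} (hη : η ∈ X.K e) :
    (X.link η).IsWSC (n - e) := by
  obtain ⟨hηf, hηc⟩ := mem_K.mp hη
  refine ⟨?_, ?_, fun a ha => ?_, fun a ha => ?_,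
    fun a ha => hX.m_pos (hX.mem_link_faces_iff.mp ha).2, fun a ha => hX.m_link_eq_sum he hη ha⟩
  · exact hX.mem_link_faces_iff.mpr ⟨Finset.disjoint_empty_right _, by rwa [Finset.union_empty]⟩
  · intro a b ha hba
    obtain ⟨hd, hf⟩ := hX.mem_link_faces_iff.mp ha
    exact hX.mem_link_faces_iff.mpr
      ⟨hd.mono_right hba, hX.mem_faces_of_subset hf (Finset.union_subset_union_right hba)⟩
  · have := hX.2.2.1 (hX.mem_link_faces_iff.mp ha).2
    rw [hX.card_union_of_mem_link hη ha] at this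
    omega
  · obtain ⟨hd, hf⟩ := hX.mem_link_faces_iff.mp ha
    obtain ⟨ρ, hρ, hsub, hρc⟩ := hX.2.2.2.1 hf
    have hηρ : η ⊆ ρ := Finset.subset_union_left.trans hsub
    refine ⟨ρ \ η, hX.mem_link_faces_iff.mpr
      ⟨Finset.disjoint_sdiff, by rwa [Finset.union_sdiff_of_subset hηρ]⟩, ?_, ?_⟩
    · exact Finset.subset_sdiff.mpr ⟨Finset.subset_union_right.trans hsub, hd.symm⟩
    · rw [Finset.card_sdiff_of_subset hηρ, hρc, hηc]
      omega

theorem sum_link_upperNbrs (hX : X.IsWSC n) {e : ℕ} {η a : Finset V} (hη : η ∈ X.K e)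
    (ha : a ∈ (X.link η).K 1) (F : Finset V → ℝ) :
    ∑ b ∈ (X.link η).upperNbrs 1 a, F (η ∪ b) =
      ∑ τ' ∈ (X.upperNbrs (e + 1) (η ∪ a)).filter (η ⊆ ·), F τ' := by
  have hiff : ∀ b ∈ (X.link η).K 1,
      a ∪ b ∈ (X.link η).K (1 + 1) ↔ (η ∪ a) ∪ (η ∪ b) ∈ X.K (e + 1 + 1) := fun b hb => by
    rw [hX.mem_link_K_iff hη, ← Finset.union_union_distrib_left]
    exact and_iff_right (Finset.disjoint_union_right.mpr
      ⟨((hX.mem_link_K_iff hη).mp ha).1, ((hX.mem_link_K_iff hη).mp hb).1⟩)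
  calc ∑ b ∈ (X.link η).upperNbrs 1 a, F (η ∪ b)
      = ∑ b ∈ (X.link η).K 1,
          if (η ∪ a) ∪ (η ∪ b) ∈ X.K (e + 1 + 1) then F (η ∪ b) else 0 := by
        rw [upperNbrs, Finset.sum_filter]
        exact Finset.sum_congr rfl fun b hb => if_congr (hiff b hb) rfl rfl
    _ = ∑ τ' ∈ (X.K (e + 1)).filter (η ⊆ ·),
          if (η ∪ a) ∪ τ' ∈ X.K (e + 1 + 1) then F τ' else 0 :=
        hX.sum_link_K hη 1 (fun τ' => if (η ∪ a) ∪ τ' ∈ X.K (e + 1 + 1) then F τ' else 0)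
    _ = _ := by rw [← Finset.sum_filter, Finset.filter_comm, upperNbrs]

theorem upperPairing_link (hX : X.IsWSC n) {e : ℕ} {η : Finset V} (hη : η ∈ X.K e)
    (φ : Finset V → ℝ) :
    (X.link η).upperPairing 1 (localize φ η) =
      ∑ τ ∈ (X.K (e + 1)).filter (η ⊆ ·), ∑ τ' ∈ (X.upperNbrs (e + 1) τ).filter (η ⊆ ·),
        X.m (τ ∪ τ') * (φ τ * φ τ') := by
  rw [upperPairing, ← hX.sum_link_K hη 1 (fun τ => ∑ τ' ∈ (X.upperNbrs (e + 1) τ).filter (η ⊆ ·),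
    X.m (τ ∪ τ') * (φ τ * φ τ'))]
  refine Finset.sum_congr rfl fun a ha => ?_
  rw [← hX.sum_link_upperNbrs hη ha]
  refine Finset.sum_congr rfl fun b _ => ?_
  change X.m (η ∪ (a ∪ b)) * _ = X.m ((η ∪ a) ∪ (η ∪ b)) * _
  rw [Finset.union_union_distrib_left]
  rfl

theorem card_common_faces (hX : X.IsWSC n) {e : ℕ} {τ τ' : Finset V} (hτ : τ ∈ X.K (e + 1))
    (hτ' : τ' ∈ X.upperNbrs (e + 1) τ) :
    (((X.K e).filter (· ⊆ τ)).filter (· ⊆ τ')).card = 1 := by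
  obtain ⟨hτf, hτc⟩ := mem_K.mp hτ
  obtain ⟨hτ'K, hu⟩ := Finset.mem_filter.mp hτ'
  have hinter : (τ ∩ τ').card = e := by
    have := Finset.card_union_add_card_inter τ τ'
    rw [(mem_K.mp hu).2, hτc, (mem_K.mp hτ'K).2] at this
    omega
  rw [Finset.filter_filter]
  simp_rw [← Finset.subset_inter_iff]
  rw [hX.filter_K_subset_eq_powersetCard (hX.mem_faces_of_subset hτf Finset.inter_subset_left),
    Finset.card_powersetCard, hinter, Nat.choose_self]

theorem upperPairing_eq_sum_link (hX : X.IsWSC n) (e : ℕ) (φ : Finset V → ℝ) :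
    X.upperPairing (e + 1) φ = ∑ η ∈ X.K e, (X.link η).upperPairing 1 (localize φ η) := by
  rw [Finset.sum_congr rfl fun η hη => hX.upperPairing_link hη φ,
    Finset.sum_sum_filter_subset_comm, upperPairing]
  refine Finset.sum_congr rfl fun τ hτ => ?_
  rw [Finset.sum_sum_filter_subset_comm]
  refine Finset.sum_congr rfl fun τ' hτ' => ?_
  rw [Finset.sum_const, hX.card_common_faces hτ hτ', one_smul]

theorem upperPairing_le_of_oneSided (hX : X.IsWSC n) {k : ℕ} (hk : k < n) {lam : ℝ}
    (hlam : 0 ≤ lam) (hexp : X.OneSided n lam) (φ : Finset V → ℝ) :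
    X.upperPairing (k + 1) φ ≤
      ∑ η ∈ X.K k, (∑ τ ∈ (X.K (k + 1)).filter (η ⊆ ·), X.m τ * φ τ) ^ 2 / X.m η +
        ((k : ℝ) + 1) * lam * X.normSq (k + 1) φ := by
  have hlocal : ∀ η ∈ X.K k, (X.link η).upperPairing 1 (localize φ η) ≤
      (∑ τ ∈ (X.K (k + 1)).filter (η ⊆ ·), X.m τ * φ τ) ^ 2 / X.m η +
        lam * ∑ τ ∈ (X.K (k + 1)).filter (η ⊆ ·), X.m τ * (φ τ * φ τ) := by
    intro η hη
    have h := (hX.link hk.le hη).upperPairing_le_of_secondEig_le (by omega) hlam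
      (secondEig_link_le hexp hk hη) (localize φ η)
    rw [show (X.link η).m ∅ = X.m η by simp [WSC.link]] at h
    rwa [← hX.sum_link_K hη 1, ← hX.sum_link_K hη 1]
  calc X.upperPairing (k + 1) φ
      ≤ ∑ η ∈ X.K k, ((∑ τ ∈ (X.K (k + 1)).filter (η ⊆ ·), X.m τ * φ τ) ^ 2 / X.m η +
          lam * ∑ τ ∈ (X.K (k + 1)).filter (η ⊆ ·), X.m τ * (φ τ * φ τ)) := by
        rw [hX.upperPairing_eq_sum_link]
        exact Finset.sum_le_sum hlocal
    _ = _ := by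
        rw [Finset.sum_add_distrib, ← Finset.mul_sum, hX.sum_K_sum_filter_superset, normSq, inn]
        ring

theorem sum_sq_mass_div_le_of_thin (hX : X.IsWSC n) {k : ℕ} {ε : ℝ} {A : Finset (Finset V)}
    (hA : A ⊆ X.K (k + 1))
    (hthin : ∀ τ ∈ A,
      (1 / ((k : ℝ) + 1)) * ∑ η ∈ (X.K k).filter (fun η => η ⊆ τ),
        (1 / X.m η) * ∑ τ' ∈ A.filter (fun τ' => η ⊆ τ'), X.m τ' ≤ ε) :
    ∑ η ∈ X.K k, (∑ τ ∈ A.filter (η ⊆ ·), X.m τ) ^ 2 / X.m η ≤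
      ((k : ℝ) + 1) * ε * ∑ τ ∈ A, X.m τ := by
  calc ∑ η ∈ X.K k, (∑ τ ∈ A.filter (η ⊆ ·), X.m τ) ^ 2 / X.m η
      = ∑ η ∈ X.K k, ∑ τ ∈ A.filter (η ⊆ ·),
          X.m τ * ((1 / X.m η) * ∑ τ' ∈ A.filter (η ⊆ ·), X.m τ') :=
        Finset.sum_congr rfl fun η _ => by rw [← Finset.sum_mul]; ring
    _ = ∑ τ ∈ A, ∑ η ∈ (X.K k).filter (· ⊆ τ),
          X.m τ * ((1 / X.m η) * ∑ τ' ∈ A.filter (η ⊆ ·), X.m τ') :=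
        Finset.sum_sum_filter_subset_comm _ _ _
    _ = ∑ τ ∈ A, X.m τ * ∑ η ∈ (X.K k).filter (· ⊆ τ),
          (1 / X.m η) * ∑ τ' ∈ A.filter (η ⊆ ·), X.m τ' :=
        Finset.sum_congr rfl fun τ _ => (Finset.mul_sum _ _ _).symm
    _ ≤ ∑ τ ∈ A, X.m τ * (((k : ℝ) + 1) * ε) := by
        refine Finset.sum_le_sum fun τ hτ => ?_
        refine mul_le_mul_of_nonneg_left ?_ (hX.m_pos (mem_K.mp (hA hτ)).1).le
        have := hthin τ hτ
        rwa [one_div, inv_mul_le_iff₀ (by positivity)] at this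
    _ = ((k : ℝ) + 1) * ε * ∑ τ ∈ A, X.m τ := by rw [← Finset.sum_mul, mul_comm]

theorem normSq_Mup_le_of_upperPairing_le (hX : X.IsWSC n) {c : ℕ} (hc : c ≤ n) {s : ℝ}
    (hs : 0 ≤ s) {φ : Finset V → ℝ} (h : X.upperPairing c φ ≤ c * s * X.normSq c φ) :
    X.normSq c (X.Mup c φ) ≤ (1 / ((c : ℝ) + 1) + s) * X.normSq c φ := by
  have hinn := hX.inn_Mup_self c φ
  have hφ := hX.normSq_nonneg c φ
  calc X.normSq c (X.Mup c φ) ≤ X.inn c (X.Mup c φ) φ := hX.normSq_Mup_le_inn hc φ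
    _ = (X.normSq c φ + X.upperPairing c φ) / ((c : ℝ) + 1) := by
        rw [eq_div_iff (by positivity)]
        linarith
    _ ≤ _ := by
        rw [div_le_iff₀ (by positivity)]
        field_simp
        nlinarith [mul_nonneg hs hφ]

theorem upperPairing_indicator_le_of_thin (hX : X.IsWSC n) {k : ℕ} (hk : k < n) {ε lam : ℝ}
    (hlam : 0 ≤ lam) (hexp : X.OneSided n lam) {A : Finset (Finset V)} (hA : A ⊆ X.K (k + 1))
    (hthin : ∀ τ ∈ A,
      (1 / ((k : ℝ) + 1)) * ∑ η ∈ (X.K k).filter (fun η => η ⊆ τ),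
        (1 / X.m η) * ∑ τ' ∈ A.filter (fun τ' => η ⊆ τ'), X.m τ' ≤ ε) :
    X.upperPairing (k + 1) (fun σ => if σ ∈ A then 1 else 0) ≤
      ((k : ℝ) + 1) * (ε + lam) * X.normSq (k + 1) (fun σ => if σ ∈ A then 1 else 0) := by
  set χ : Finset V → ℝ := fun σ => if σ ∈ A then 1 else 0
  have hmass : ∀ s : Finset (Finset V), ∑ τ ∈ s, X.m τ * χ τ = ∑ τ ∈ s ∩ A, X.m τ := fun s => by
    simp only [χ, mul_ite, mul_one, mul_zero, Finset.sum_ite_mem]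
  have hlocal : ∀ η : Finset V, (X.K (k + 1)).filter (η ⊆ ·) ∩ A = A.filter (η ⊆ ·) := fun η => by
    ext τ
    have := @hA τ
    simp only [Finset.mem_inter, Finset.mem_filter]
    tauto
  have hnorm : X.normSq (k + 1) χ = ∑ τ ∈ A, X.m τ := by
    have hχ : ∀ τ, χ τ * χ τ = χ τ := fun τ => by by_cases τ ∈ A <;> simp [χ, *]
    simp only [normSq, inn, hχ, hmass, Finset.inter_eq_right.mpr hA]
  calc X.upperPairing (k + 1) χ
      ≤ _ := hX.upperPairing_le_of_oneSided hk hlam hexp χ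
    _ ≤ ((k : ℝ) + 1) * ε * ∑ τ ∈ A, X.m τ + ((k : ℝ) + 1) * lam * X.normSq (k + 1) χ := by
        simp only [hmass, hlocal]
        gcongr
        exact hX.sum_sq_mass_div_le_of_thin hA hthin
    _ = _ := by rw [hnorm]; ring

end IsWSC

end WSC

theorem mixing_locally_thin_general {V : Type*} [DecidableEq V] (X : WSC V) (n : ℕ)
    (hX : X.IsWSC n) (k : ℕ) (hk : k < n) (ε lam : ℝ) (hε0 : 0 < ε)
    (hl0 : 0 ≤ lam) (A : Finset (Finset V)) (hA : A ⊆ X.K (k + 1))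
    (hthin : ∀ τ ∈ A,
      (1 / ((k : ℝ) + 1)) * ∑ η ∈ (X.K k).filter (fun η => η ⊆ τ),
        (1 / X.m η) * ∑ τ' ∈ A.filter (fun τ' => η ⊆ τ'), X.m τ' ≤ ε)
    (hexp : X.OneSided n lam) :
    X.norm (k + 1) (X.Mup (k + 1) (fun σ => if σ ∈ A then (1 : ℝ) else 0)) ≤
      (1 / Real.sqrt ((k : ℝ) + 2) + Real.sqrt (ε + lam)) *
        X.norm (k + 1) (fun σ => if σ ∈ A then (1 : ℝ) else 0) := by
  have hs : 0 ≤ ε + lam := add_nonneg hε0.le hl0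
  have hpairing := hX.upperPairing_indicator_le_of_thin hk hl0 hexp hA hthin
  have hMup := hX.normSq_Mup_le_of_upperPairing_le hk hs (by push_cast; exact hpairing)
  have h := norm_le_of_normSq_le (by positivity) hs hMup
  rwa [one_div, Real.sqrt_inv, ← one_div, Nat.cast_add_one, add_assoc, one_add_one_eq_two] at h

/-- Let `0 ≤ k ≤ n-1`, `0 < ε < 1`, `0 ≤ λ ≤ 1`, and let `A ⊆ X(k)` be
`ε`-locally thin, i.e. `F(A) = max_{τ ∈ A} (1/(k+1)) Σ_{η ∈ X(k-1), η ⊂ τ}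
((1/m(η)) Σ_{τ' ∈ A, η ⊂ τ'} m(τ')) ≤ ε`. If `X` is a one-sided `λ`-local spectral
expander, then `‖M⁺_k χ_A‖ ≤ (1/√(k+2) + √(ε+λ)) ‖χ_A‖`. -/
theorem mixing_locally_thin {V : Type*} [DecidableEq V] (X : WSC V) (n : ℕ)
    (hX : X.IsWSC n) (k : ℕ) (hk : k < n) (ε lam : ℝ) (hε0 : 0 < ε) (hε1 : ε < 1)
    (hl0 : 0 ≤ lam) (hl1 : lam ≤ 1) (A : Finset (Finset V)) (hA : A ⊆ X.K (k + 1))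
    (hthin : ∀ τ ∈ A,
      (1 / ((k : ℝ) + 1)) * ∑ η ∈ (X.K k).filter (fun η => η ⊆ τ),
        (1 / X.m η) * ∑ τ' ∈ A.filter (fun τ' => η ⊆ τ'), X.m τ' ≤ ε)
    (hexp : X.OneSided n lam) :
    X.norm (k + 1) (X.Mup (k + 1) (fun σ => if σ ∈ A then (1 : ℝ) else 0)) ≤
      (1 / Real.sqrt ((k : ℝ) + 2) + Real.sqrt (ε + lam)) *
        X.norm (k + 1) (fun σ => if σ ∈ A then (1 : ℝ) else 0) :=
  mixing_locally_thin_general X n hX k hk ε lam hε0 hl0 A hA hthin hexp
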